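/- arXiv:cs/0610010 — 7 statements merged into one kernel-verified Lean document; each statement's English description precedes it below -/
import Mathlib

section
/- Let h be a hash function from sequences of n symbols to [0, 2^L) that is recursive, i.e., there exists a fixed function F (independent of the random choice of h from its family) such that h(x_2,...,x_{n+1}) = F(h(x_1,...,x_n), x_1, x_{n+1}). Then the family of such hash functions cannot be pairwise independent. -/
open MeasureTheory

/-- A recursive hash function family (there is a fixed `F`, common to all members, with
`h(x_2,…,x_{n+1}) = F(h(x_1,…,x_n), x_1, x_{n+1})`) cannot be pairwise independent. -/
theorem stmt_0
    {Ω : Type*} [MeasurableSpace Ω] (μ : Measure Ω) [IsProbabilityMeasure μ]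
    {A : Type*} [Nontrivial A] (n L : ℕ) (hn : 1 ≤ n) (hL : 1 ≤ L)
    (H : Ω → (Fin n → A) → Fin (2 ^ L))
    (F : Fin (2 ^ L) → A → A → Fin (2 ^ L))
    (hmeas : ∀ (u : Fin n → A) (y : Fin (2 ^ L)), MeasurableSet {ω | H ω u = y})
    (hrec : ∀ ω (x : Fin (n + 1) → A),
      H ω (fun i => x i.succ) = F (H ω (fun i => x i.castSucc)) (x 0) (x (Fin.last n))) :
    ¬ (∀ (u v : Fin n → A), u ≠ v → ∀ y z : Fin (2 ^ L),
        μ {ω | H ω u = y ∧ H ω v = z} = 1 / 4 ^ L) := by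
  intro hpair
  obtain ⟨a, b, hab⟩ := exists_pair_ne A
  set x : Fin (n + 1) → A := fun j => if j = Fin.last n then b else a with hx
  set u : Fin n → A := fun i => x i.castSucc with hu
  set v : Fin n → A := fun i => x i.succ with hvdef
  have hi : n - 1 < n := Nat.sub_lt (by omega) one_pos
  have huv : u ≠ v := by
    intro h
    have h2 := congrFun h ⟨n - 1, hi⟩
    have hc : (⟨n - 1, hi⟩ : Fin n).castSucc ≠ Fin.last n := by
      simp [Fin.ext_iff, Fin.castSucc, Fin.last]; omega
    have hs : (⟨n - 1, hi⟩ : Fin n).succ = Fin.last n := by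
      simp [Fin.ext_iff, Fin.succ, Fin.last]; omega
    simp only [hu, hvdef, hx, hc, hs, if_neg, if_pos] at h2
    exact hab h2
  have hx0 : x 0 = a := by
    have : (0 : Fin (n + 1)) ≠ Fin.last n := by
      simp [Fin.ext_iff, Fin.last]; omega
    simp [hx, this]
  have hxl : x (Fin.last n) = b := by simp [hx]
  have hv : ∀ ω, H ω v = F (H ω u) a b := by
    intro ω
    have := hrec ω x
    rwa [hx0, hxl] at this
  -- Fin (2^L) has at least two elements
  have h2L : 1 < 2 ^ L := by
    calc 1 < 2 := one_lt_two
    _ ≤ 2 ^ L := Nat.le_self_pow (by omega) 2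
  haveI : Nontrivial (Fin (2 ^ L)) := Fin.nontrivial_iff_two_le.mpr h2L
  obtain ⟨z', hz'⟩ := exists_ne (F 0 a b)
  have hkey := hpair u v huv 0 z'
  have hempty : {ω | H ω u = 0 ∧ H ω v = z'} = ∅ := by
    ext ω
    simp only [Set.mem_setOf_eq, Set.mem_empty_iff_false, iff_false]
    rintro ⟨h1, h2⟩
    rw [hv ω, h1] at h2
    exact hz' h2.symm
  rw [hempty, measure_empty] at hkey
  have : (1 : ENNReal) / 4 ^ L ≠ 0 := by
    simp [ENNReal.div_eq_top]
  exact this hkey.symm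
end

section
/- Let h be a uniform recursive hash function family with recursion function F, i.e., h(x_2,...,x_{n+1}) = F(h(x_1,...,x_n), x_1, x_{n+1}) and for every input u and every y in [0,2^L), P(h(u)=y) = 1/2^L. Then for any fixed symbols v, w, the map x ↦ F(x, v, w) is injective on [0,2^L). -/
open MeasureTheory

/-!
For a window `x` starting with `v` and ending with `w`, the recursion says that the hash of the
shifted window is `F (·, v, w)` applied to the hash of `x`. Both hashes are uniform, so merging two
values under `F (·, v, w)` would give some value twice the measure `2⁻ᴸ` it must have.
-/

theorem Function.injective_of_measure_fiber_eq {Ω β γ : Type*} [MeasurableSpace Ω]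
    {μ : Measure Ω} {X : Ω → β} {f : β → γ} {p : ENNReal} (hp0 : p ≠ 0) (hp : p ≠ ⊤)
    (hmeas : ∀ b, MeasurableSet {ω | X ω = b}) (hX : ∀ b, μ {ω | X ω = b} = p)
    (hfX : ∀ c, μ {ω | f (X ω) = c} = p) :
    Function.Injective f := by
  intro a b hab
  by_contra hne
  have hdisj : Disjoint {ω | X ω = a} {ω | X ω = b} :=
    Set.disjoint_left.2 fun ω ha hb => hne (ha.symm.trans hb)
  have hsub : {ω | X ω = a} ∪ {ω | X ω = b} ⊆ {ω | f (X ω) = f a} := by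
    rintro ω (h | h) <;> simp only [Set.mem_ofPred_eq] at h ⊢ <;> rw [h, hab]
  have h2p : p + p ≤ p + 0 := by
    calc p + p = μ ({ω | X ω = a} ∪ {ω | X ω = b}) := by
          rw [measure_union hdisj (hmeas b), hX, hX]
      _ ≤ μ {ω | f (X ω) = f a} := measure_mono hsub
      _ = p + 0 := by rw [hfX, add_zero]
  exact hp0 (nonpos_iff_eq_zero.1 (ENNReal.le_of_add_le_add_left hp h2p))

theorem stmt_1_general
    {Ω : Type*} [MeasurableSpace Ω] (μ : Measure Ω)
    {A : Type*} (n L : ℕ) (hn : 1 ≤ n)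
    (H : Ω → (Fin n → A) → Fin (2 ^ L))
    (F : Fin (2 ^ L) → A → A → Fin (2 ^ L))
    (hmeas : ∀ (u : Fin n → A) (y : Fin (2 ^ L)), MeasurableSet {ω | H ω u = y})
    (hrec : ∀ ω (x : Fin (n + 1) → A),
      H ω (fun i => x i.succ) = F (H ω (fun i => x i.castSucc)) (x 0) (x (Fin.last n)))
    (hunif : ∀ (u : Fin n → A) (y : Fin (2 ^ L)), μ {ω | H ω u = y} = 1 / 2 ^ L) :
    ∀ v w : A, Function.Injective (fun x : Fin (2 ^ L) => F x v w) := by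
  intro v w
  obtain ⟨m, rfl⟩ : ∃ m, n = m + 1 := ⟨n - 1, by omega⟩
  -- `x 0` and `x (Fin.last _)` are distinct positions only because `n ≥ 1`
  set x : Fin (m + 2) → A := Fin.cons v fun _ => w
  have hshift : ∀ ω, H ω (fun i => x i.succ) = F (H ω (fun i => x i.castSucc)) v w := by
    intro ω
    simpa [x, ← Fin.succ_last] using hrec ω x
  refine Function.injective_of_measure_fiber_eq (μ := μ) (X := fun ω => H ω fun i => x i.castSucc)
    (by simp) (by simp) (hmeas _) (hunif _) fun c => by simpa only [← hshift] using hunif _ c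

/-- For a uniform recursive hash function family with recursion function `F`,
the map `x ↦ F(x, v, w)` is injective on the range `[0, 2^L)` for any fixed symbols `v, w`. -/
theorem stmt_1
    {Ω : Type*} [MeasurableSpace Ω] (μ : Measure Ω) [IsProbabilityMeasure μ]
    {A : Type*} (n L : ℕ) (hn : 1 ≤ n)
    (H : Ω → (Fin n → A) → Fin (2 ^ L))
    (F : Fin (2 ^ L) → A → A → Fin (2 ^ L))
    (hmeas : ∀ (u : Fin n → A) (y : Fin (2 ^ L)), MeasurableSet {ω | H ω u = y})
    (hrec : ∀ ω (x : Fin (n + 1) → A),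
      H ω (fun i => x i.succ) = F (H ω (fun i => x i.castSucc)) (x 0) (x (Fin.last n)))
    (hunif : ∀ (u : Fin n → A) (y : Fin (2 ^ L)), μ {ω | H ω u = y} = 1 / 2 ^ L) :
    ∀ v w : A, Function.Injective (fun x : Fin (2 ^ L) => F x v w) :=
  stmt_1_general μ n L hn H F hmeas hrec hunif
end

section
/- No uniform hash function family that is recursive over hashed values can be 3-wise independent. That is, if h(x_2,...,x_{n+1}) = F(h(x_1,...,x_n), τ(x_1), τ(x_{n+1})) for a fixed F and a randomized symbol hash τ, and h is uniform, then h is not 3-wise independent. -/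
open MeasureTheory

/-!
Slide a window of length `n` along `a^n b b`: its three windows `a^n`, `a^(n-1) b`, `a^(n-2) b b`
are obtained from one another by the same recursion step (drop `a`, append `b`), so their hashes
are `h₁`, `f h₁`, `f (f h₁)` with `f = F(·, τ a, τ b)`. Hence `h₁ = h₂` forces `h₃ = h₂`, and the
event `h₁ = h₂ = y ≠ h₃` is empty although 3-wise independence gives it probability `2^(-3L)`.
-/

def blockWord {A : Type*} {n : ℕ} (a b : A) (k : ℕ) : Fin n → A :=
  fun i => if (i : ℕ) < k then a else b

section

variable {A : Type*} {n : ℕ} {a b : A}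

theorem blockWord_ne_of_lt (hab : a ≠ b) {j k : ℕ} (hjk : j < k) (hk : k ≤ n) :
    (blockWord a b j : Fin n → A) ≠ blockWord a b k := fun h =>
  hab (by simpa [blockWord, hjk] using (congrFun h ⟨j, by omega⟩).symm)

variable {Ω B C : Type*} {H : Ω → (Fin n → A) → B} {τ : Ω → A → C} {F : B → C → C → B}

def IsRecursiveHash (H : Ω → (Fin n → A) → B) (τ : Ω → A → C) (F : B → C → C → B) : Prop :=
  ∀ ω (x : Fin (n + 1) → A),
    H ω (fun i => x i.succ) = F (H ω (fun i => x i.castSucc)) (τ ω (x 0)) (τ ω (x (Fin.last n)))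

theorem hash_blockWord_eq_recursive
    (hrec : IsRecursiveHash H τ F) (ω : Ω) {k : ℕ} (hk : k < n) :
    H ω (blockWord a b k) = F (H ω (blockWord a b (k + 1))) (τ ω a) (τ ω b) := by
  have := hrec ω (blockWord a b (k + 1))
  unfold blockWord at this ⊢
  simpa [Nat.lt_succ_iff, Nat.not_le.mpr hk] using this

theorem hash_blockWord_eq_of_eq
    (hrec : IsRecursiveHash H τ F) (ω : Ω) {k : ℕ} (hk : k + 2 ≤ n)
    (h : H ω (blockWord a b (k + 2)) = H ω (blockWord a b (k + 1))) :
    H ω (blockWord a b k) = H ω (blockWord a b (k + 1)) := by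
  calc H ω (blockWord a b k) = F (H ω (blockWord a b (k + 1))) (τ ω a) (τ ω b) :=
        hash_blockWord_eq_recursive hrec ω (by omega)
    _ = F (H ω (blockWord a b (k + 2))) (τ ω a) (τ ω b) := by rw [h]
    _ = H ω (blockWord a b (k + 1)) := (hash_blockWord_eq_recursive hrec ω (by omega)).symm

end

theorem stmt_2_general
    {Ω : Type*} [MeasurableSpace Ω] (μ : Measure Ω)
    {A : Type*} [Nontrivial A] (n L : ℕ) (hn : 2 ≤ n) (hL : 1 ≤ L)
    (H : Ω → (Fin n → A) → Fin (2 ^ L))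
    (τ : Ω → A → Fin (2 ^ L))
    (F : Fin (2 ^ L) → Fin (2 ^ L) → Fin (2 ^ L) → Fin (2 ^ L))
    (hrec : ∀ ω (x : Fin (n + 1) → A),
      H ω (fun i => x i.succ) =
        F (H ω (fun i => x i.castSucc)) (τ ω (x 0)) (τ ω (x (Fin.last n)))) :
    ¬ (∀ (u₁ u₂ u₃ : Fin n → A), u₁ ≠ u₂ → u₁ ≠ u₃ → u₂ ≠ u₃ →
        ∀ y₁ y₂ y₃ : Fin (2 ^ L),
          μ {ω | H ω u₁ = y₁ ∧ H ω u₂ = y₂ ∧ H ω u₃ = y₃} = 1 / 2 ^ (3 * L)) := by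
  intro h3
  obtain ⟨m, rfl⟩ : ∃ m, n = m + 2 := ⟨n - 2, by omega⟩
  obtain ⟨a, b, hab⟩ := exists_pair_ne A
  have : Nontrivial (Fin (2 ^ L)) :=
    Fin.nontrivial_iff_two_le.mpr (Nat.pow_le_pow_right two_pos hL)
  obtain ⟨y, y', hy⟩ := exists_pair_ne (Fin (2 ^ L))
  have hempty : {ω | H ω (blockWord a b (m + 2)) = y ∧ H ω (blockWord a b (m + 1)) = y ∧
      H ω (blockWord a b m) = y'} = ∅ := by
    refine Set.eq_empty_of_forall_notMem fun ω ⟨h₁, h₂, h₃⟩ => hy ?_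
    rw [← h₃, hash_blockWord_eq_of_eq hrec ω le_rfl (h₁.trans h₂.symm), h₂]
  have := h3 _ _ _ (blockWord_ne_of_lt hab (m + 1).lt_succ_self le_rfl).symm
    (blockWord_ne_of_lt hab (by omega : m < m + 2) le_rfl).symm
    (blockWord_ne_of_lt hab m.lt_succ_self (by omega)).symm y y y'
  rw [hempty, measure_empty] at this
  exact ENNReal.div_pos one_ne_zero (by simp) |>.ne this

/-- A uniform hash function family that is recursive over hashed values
(`h(x_2,…,x_{n+1}) = F(h(x_1,…,x_n), τ(x_1), τ(x_{n+1}))` for a fixed `F` and a randomized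
symbol hash `τ`) cannot be 3-wise independent. -/
theorem stmt_2
    {Ω : Type*} [MeasurableSpace Ω] (μ : Measure Ω) [IsProbabilityMeasure μ]
    {A : Type*} [Nontrivial A] (n L : ℕ) (hn : 2 ≤ n) (hL : 1 ≤ L)
    (H : Ω → (Fin n → A) → Fin (2 ^ L))
    (τ : Ω → A → Fin (2 ^ L))
    (F : Fin (2 ^ L) → Fin (2 ^ L) → Fin (2 ^ L) → Fin (2 ^ L))
    (hmeas : ∀ (u : Fin n → A) (y : Fin (2 ^ L)), MeasurableSet {ω | H ω u = y})
    (hrec : ∀ ω (x : Fin (n + 1) → A),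
      H ω (fun i => x i.succ) =
        F (H ω (fun i => x i.castSucc)) (τ ω (x 0)) (τ ω (x (Fin.last n))))
    (hunif : ∀ (u : Fin n → A) (y : Fin (2 ^ L)), μ {ω | H ω u = y} = 1 / 2 ^ L) :
    ¬ (∀ (u₁ u₂ u₃ : Fin n → A), u₁ ≠ u₂ → u₁ ≠ u₃ → u₂ ≠ u₃ →
        ∀ y₁ y₂ y₃ : Fin (2 ^ L),
          μ {ω | H ω u₁ = y₁ ∧ H ω u₂ = y₂ ∧ H ω u₃ = y₃} = 1 / 2 ^ (3 * L)) :=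
  stmt_2_general μ n L hn hL H τ F hrec
end

section
/- Let h_1 : Σ → GF(2)[x]/(x^L + 1) be a fully independent uniformly random hash of symbols, and define the Cyclic hash h(a_1,...,a_n) = h_1(a_1) x^{n-1} + h_1(a_2) x^{n-2} + ... + h_1(a_n) in GF(2)[x]/(x^L+1), with L ≥ n. If n is even, then P(h(a^n) = 0) ≥ 1/2^{L-1} > 1/2^L; in particular the Cyclic hash family is not uniform for even n. -/
/-!
If `n` is even then `1 + x + ⋯ + x^{n-1}` is divisible by `x + 1`, and `x + 1` is a zero divisor
in `GF(2)[x]/(x^L + 1)`: it is annihilated by the nonzero element `q = 1 + x + ⋯ + x^{L-1}`,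
since `(x + 1) q = x^L + 1`. Hence the hash of `a^n`, which is `h₁(a) (1 + x + ⋯ + x^{n-1})`,
vanishes both when `h₁(a) = 0` and when `h₁(a) = q`, two events of probability `2^{-L}` each.
-/

open MeasureTheory Polynomial
open scoped ENNReal

open Finset in
theorem add_one_dvd_geom_sum_of_even {R : Type*} [CommRing R] (x : R) {n : ℕ} (hn : Even n) :
    x + 1 ∣ ∑ i ∈ range n, x ^ i := by
  obtain ⟨m, rfl⟩ := hn
  induction m with
  | zero => simp
  | succ m ih =>
    rw [show m + 1 + (m + 1) = m + m + 1 + 1 by ring, sum_range_succ, sum_range_succ, add_assoc,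
      pow_succ x (m + m), ← mul_one_add, add_comm 1 x]
    exact dvd_add ih (dvd_mul_left _ _)

open Finset in
theorem geom_sum_mul_add_one {R : Type*} [CommRing R] [CharP R 2] (x : R) (n : ℕ) :
    (∑ i ∈ range n, x ^ i) * (x + 1) = x ^ n + 1 := by
  rw [← CharTwo.sub_eq_add, geom_sum_mul, CharTwo.sub_eq_add]

namespace AdjoinRoot

variable {K : Type*} [CommRing K] {L : ℕ}

theorem geom_sum_root_mul_root_add_one [CharP K 2] :
    (∑ i ∈ Finset.range L, root (X ^ L + 1 : K[X]) ^ i) * (root (X ^ L + 1 : K[X]) + 1) = 0 := by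
  simpa [map_sum] using
    (congrArg (mk (X ^ L + 1 : K[X])) (geom_sum_mul_add_one (X : K[X]) L)).trans mk_self

theorem geom_sum_root_ne_zero [Nontrivial K] (hL : L ≠ 0) :
    ∑ i ∈ Finset.range L, root (X ^ L + 1 : K[X]) ^ i ≠ 0 := by
  have hdeg : (∑ i ∈ Finset.range L, (X : K[X]) ^ i).natDegree < (X ^ L + 1 : K[X]).natDegree := by
    rw [← C_1, natDegree_X_pow_add_C]
    refine lt_of_le_of_lt (natDegree_sum_le_of_forall_le _ _ fun i hi => ?_) (Nat.pred_lt hL)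
    rw [natDegree_X_pow]
    exact Nat.le_pred_of_lt (Finset.mem_range.mp hi)
  simpa [map_sum] using
    mk_ne_zero_of_natDegree_lt (by simpa using monic_X_pow_add_C (1 : K) hL)
      (monic_geom_sum_X hL).ne_zero hdeg

end AdjoinRoot

theorem MeasureTheory.measure_eq_zero_add_measure_eq_le_of_mul_eq_zero {Ω R : Type*}
    [MeasurableSpace Ω] [MulZeroClass R] (μ : Measure Ω) (f : Ω → R) {q c : R} (hq : q ≠ 0)
    (hqc : q * c = 0) (hmeas : MeasurableSet {ω | f ω = q}) :
    μ {ω | f ω = 0} + μ {ω | f ω = q} ≤ μ {ω | f ω * c = 0} := by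
  have hdisj : Disjoint {ω | f ω = 0} {ω | f ω = q} :=
    Set.disjoint_left.mpr fun ω h0 hq' => hq (hq'.symm.trans h0)
  rw [← measure_union hdisj hmeas]
  refine measure_mono ?_
  rintro ω (h | h) <;> simp_all

theorem ENNReal.one_div_two_pow_succ_add_self (k : ℕ) :
    (1 : ℝ≥0∞) / 2 ^ (k + 1) + 1 / 2 ^ (k + 1) = 1 / 2 ^ k := by
  rw [one_div, one_div, ENNReal.inv_pow, ENNReal.inv_pow, pow_succ, ← mul_add,
    ENNReal.inv_two_add_inv_two, mul_one]

theorem ENNReal.one_div_two_pow_succ_lt (k : ℕ) : (1 : ℝ≥0∞) / 2 ^ (k + 1) < 1 / 2 ^ k := by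
  rw [one_div, one_div, ENNReal.inv_lt_inv]
  exact_mod_cast Nat.pow_lt_pow_right Nat.one_lt_two k.lt_succ_self

theorem stmt_3_general
    {Ω : Type*} [MeasurableSpace Ω] (μ : Measure Ω)
    {A : Type*} (n L : ℕ) (hL : 1 ≤ L) (hn : Even n)
    (h₁ : Ω → A → AdjoinRoot ((X : Polynomial (ZMod 2)) ^ L + 1))
    (hmeas : ∀ (b : A) (r : AdjoinRoot ((X : Polynomial (ZMod 2)) ^ L + 1)),
      MeasurableSet {ω | h₁ ω b = r})
    (hunif : ∀ (b : A) (r : AdjoinRoot ((X : Polynomial (ZMod 2)) ^ L + 1)),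
      μ {ω | h₁ ω b = r} = 1 / 2 ^ L)
    (a : A) :
    1 / 2 ^ (L - 1) ≤
        μ {ω | (∑ i : Fin n,
          h₁ ω a * (AdjoinRoot.root ((X : Polynomial (ZMod 2)) ^ L + 1)) ^ (n - 1 - (i : ℕ))) = 0}
      ∧ (1 : ℝ≥0∞) / 2 ^ L < 1 / 2 ^ (L - 1) := by
  obtain ⟨k, rfl⟩ := Nat.exists_eq_add_of_le' hL
  set ρ := AdjoinRoot.root ((X : Polynomial (ZMod 2)) ^ (k + 1) + 1)
  have hsum (ω : Ω) : ∑ i : Fin n, h₁ ω a * ρ ^ (n - 1 - (i : ℕ)) =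
      h₁ ω a * ∑ i ∈ Finset.range n, ρ ^ i := by
    rw [← Finset.mul_sum, Fin.sum_univ_eq_sum_range (fun i => ρ ^ (n - 1 - i)),
      Finset.sum_range_reflect (ρ ^ ·)]
  have hannihilate : (∑ i ∈ Finset.range (k + 1), ρ ^ i) * ∑ i ∈ Finset.range n, ρ ^ i = 0 := by
    obtain ⟨c, hc⟩ := add_one_dvd_geom_sum_of_even ρ hn
    rw [hc, ← mul_assoc, AdjoinRoot.geom_sum_root_mul_root_add_one, zero_mul]
  simp only [hsum, Nat.add_sub_cancel]
  refine ⟨?_, ENNReal.one_div_two_pow_succ_lt k⟩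
  calc (1 : ℝ≥0∞) / 2 ^ k
      = μ {ω | h₁ ω a = 0} + μ {ω | h₁ ω a = ∑ i ∈ Finset.range (k + 1), ρ ^ i} := by
        rw [hunif, hunif, ENNReal.one_div_two_pow_succ_add_self]
    _ ≤ _ := measure_eq_zero_add_measure_eq_le_of_mul_eq_zero μ _
        (AdjoinRoot.geom_sum_root_ne_zero k.succ_ne_zero) hannihilate (hmeas a _)

/-- The Cyclic hash `h(a_1,…,a_n) = Σ h_1(a_i) x^{n-i}` in `GF(2)[x]/(x^L+1)` is not
uniform for `n` even: `P(h(aᵃⁿ) = 0) ≥ 1/2^{L-1} > 1/2^L`. -/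
theorem stmt_3
    {Ω : Type*} [MeasurableSpace Ω] (μ : Measure Ω) [IsProbabilityMeasure μ]
    {A : Type*} (n L : ℕ) (hnL : n ≤ L) (hL : 1 ≤ L) (hn : Even n) (hn1 : 1 ≤ n)
    (h₁ : Ω → A → AdjoinRoot ((X : Polynomial (ZMod 2)) ^ L + 1))
    (hmeas : ∀ (b : A) (r : AdjoinRoot ((X : Polynomial (ZMod 2)) ^ L + 1)),
      MeasurableSet {ω | h₁ ω b = r})
    (hunif : ∀ (b : A) (r : AdjoinRoot ((X : Polynomial (ZMod 2)) ^ L + 1)),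
      μ {ω | h₁ ω b = r} = 1 / 2 ^ L)
    (hind : ProbabilityTheory.iIndepFun
      (m := fun _ : A => (⊤ : MeasurableSpace (AdjoinRoot ((X : Polynomial (ZMod 2)) ^ L + 1))))
      (fun b ω => h₁ ω b) μ)
    (a : A) :
    1 / 2 ^ (L - 1) ≤
        μ {ω | (∑ i : Fin n,
          h₁ ω a * (AdjoinRoot.root ((X : Polynomial (ZMod 2)) ^ L + 1)) ^ (n - 1 - (i : ℕ))) = 0}
      ∧ (1 : ℝ≥0∞) / 2 ^ L < 1 / 2 ^ (L - 1) :=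
  stmt_3_general μ n L hL hn h₁ hmeas hunif a
end

section
/- The Cyclic hash family is never pairwise independent: for n = 3 and distinct symbols a, b, P(h(aab) = h(aba)) ≥ 1/2^{L-1} > 1/2^L. -/
/-!
Write `u = h₁(a)`, `v = h₁(b)` and `x` for the class of `X`. The hashes of `aab` and `aba` differ by
`(u - v)(x - 1)`, and `g = 1 + x + ⋯ + x^(L-1)` is a nonzero element with `g (x - 1) = x^L - 1 = 0`.
So the two hashes collide whenever `u - v ∈ {0, g}`, and since `u` is uniform and independent of `v`,
the difference `u - v` is uniform too, so this event already has probability `2 / 2^L`.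
-/

open MeasureTheory Polynomial ProbabilityTheory
open scoped ENNReal

theorem ProbabilityTheory.IndepFun.measure_sub_preimage_singleton
    {Ω G : Type*} {_ : MeasurableSpace Ω} {μ : Measure Ω} [IsProbabilityMeasure μ]
    [AddGroup G] [Countable G] [MeasurableSpace G] [MeasurableSingletonClass G]
    {X Y : Ω → G} (hXY : IndepFun X Y μ) (hX : Measurable X) (hY : Measurable Y)
    {p : ℝ≥0∞} (hX_unif : ∀ r, μ (X ⁻¹' {r}) = p) (c : G) :
    μ ((X - Y) ⁻¹' {c}) = p := by
  have h_fibers : (X - Y) ⁻¹' {c} = ⋃ r, X ⁻¹' {c + r} ∩ Y ⁻¹' {r} := by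
    ext ω; simp [sub_eq_iff_eq_add]
  have h_total : ∑' r, μ (Y ⁻¹' {r}) = 1 := by
    rw [← measure_iUnion (pairwise_disjoint_fiber Y) (fun r => hY (measurableSet_singleton r)),
      ← Set.preimage_iUnion, Set.iUnion_of_singleton, Set.preimage_univ, measure_univ]
  rw [h_fibers, measure_iUnion, tsum_congr fun r => hXY.measure_inter_preimage_eq_mul _ _
      (measurableSet_singleton (c + r)) (measurableSet_singleton r)]
  · simp_rw [hX_unif, ENNReal.tsum_mul_left, h_total, mul_one]
  · exact fun r s hrs => (pairwise_disjoint_fiber Y hrs).mono inf_le_right inf_le_right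
  · exact fun r => (hX (measurableSet_singleton _)).inter (hY (measurableSet_singleton _))

theorem ProbabilityTheory.IndepFun.measure_sub_preimage_finset
    {Ω G : Type*} {_ : MeasurableSpace Ω} {μ : Measure Ω} [IsProbabilityMeasure μ]
    [AddGroup G] [Countable G] [MeasurableSpace G] [MeasurableSingletonClass G]
    {X Y : Ω → G} (hXY : IndepFun X Y μ) (hX : Measurable X) (hY : Measurable Y)
    {p : ℝ≥0∞} (hX_unif : ∀ r, μ (X ⁻¹' {r}) = p) (s : Finset G) :
    μ ((X - Y) ⁻¹' s) = s.card * p := by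
  rw [← sum_measure_preimage_singleton s fun c _ => (hX.sub hY) (measurableSet_singleton c),
    Finset.sum_congr rfl fun c _ => hXY.measure_sub_preimage_singleton hX hY hX_unif c,
    Finset.sum_const, nsmul_eq_mul]

theorem cyclic_hash_aab_eq_aba_iff {S : Type*} [CommRing S] (u v x : S) :
    u * x ^ 2 + u * x + v = u * x ^ 2 + v * x + u ↔ (u - v) * (x - 1) = 0 := by
  rw [← sub_eq_zero]
  constructor <;> intro h <;> linear_combination h

namespace AdjoinRoot

variable {R : Type*} [CommRing R]

theorem finite_of_monic [Finite R] {f : R[X]} (hf : f.Monic) : Finite (AdjoinRoot f) :=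
  have : Module.Finite R (AdjoinRoot f) := (powerBasis' hf).finite
  Module.finite_of_finite R

theorem root_X_pow_add_one_pow [CharP R 2] (n : ℕ) : root ((X : R[X]) ^ n + 1) ^ n = 1 := by
  have h := mk_self (f := (X : R[X]) ^ n + 1)
  rw [map_add, map_pow, mk_X, map_one, add_eq_zero_iff_eq_neg] at h
  have h_neg_one := congrArg (algebraMap R (AdjoinRoot ((X : R[X]) ^ n + 1)))
    (CharTwo.neg_eq (1 : R))
  rwa [map_neg, map_one, ← h] at h_neg_one

theorem geom_sum_root_ne_zero_s4 [Nontrivial R] {f : R[X]} (hf : f.Monic) (hdeg : f.natDegree ≠ 0) :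
    ∑ i ∈ Finset.range f.natDegree, root f ^ i ≠ 0 := by
  have h : ∑ i ∈ Finset.range f.natDegree, root f ^ i
      = mk f (∑ i ∈ Finset.range f.natDegree, X ^ i) := by
    simp only [map_sum, map_pow, mk_X]
  rw [h]
  refine mk_ne_zero_of_natDegree_lt hf (monic_geom_sum_X hdeg).ne_zero ?_
  calc _ ≤ f.natDegree - 1 := natDegree_sum_le_of_forall_le _ _ fun i hi =>
        (natDegree_X_pow_le i).trans (Nat.le_sub_one_of_lt (Finset.mem_range.mp hi))
    _ < f.natDegree := by omega

end AdjoinRoot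

theorem ENNReal.one_div_two_pow_sub_one {n : ℕ} (hn : n ≠ 0) :
    (1 : ℝ≥0∞) / 2 ^ (n - 1) = 2 * (1 / 2 ^ n) := by
  obtain ⟨m, rfl⟩ := Nat.exists_eq_add_one_of_ne_zero hn
  rw [Nat.add_sub_cancel, one_div, one_div, ENNReal.inv_pow, ENNReal.inv_pow, pow_succ',
    ← mul_assoc, ENNReal.mul_inv_cancel two_ne_zero ofNat_ne_top, one_mul]

/-- The Cyclic hash family is never pairwise independent: for `n = 3` and distinct symbols
`a, b`, `P(h(aab) = h(aba)) ≥ 1/2^{L-1} > 1/2^L`. -/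
theorem stmt_4
    {Ω : Type*} [MeasurableSpace Ω] (μ : Measure Ω) [IsProbabilityMeasure μ]
    {A : Type*} (L : ℕ) (hL : 3 ≤ L)
    (h₁ : Ω → A → AdjoinRoot ((X : Polynomial (ZMod 2)) ^ L + 1))
    (hmeas : ∀ (c : A) (r : AdjoinRoot ((X : Polynomial (ZMod 2)) ^ L + 1)),
      MeasurableSet {ω | h₁ ω c = r})
    (hunif : ∀ (c : A) (r : AdjoinRoot ((X : Polynomial (ZMod 2)) ^ L + 1)),
      μ {ω | h₁ ω c = r} = 1 / 2 ^ L)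
    (hind : ProbabilityTheory.iIndepFun
      (m := fun _ : A => (⊤ : MeasurableSpace (AdjoinRoot ((X : Polynomial (ZMod 2)) ^ L + 1))))
      (fun c ω => h₁ ω c) μ)
    (a b : A) (hab : a ≠ b) :
    1 / 2 ^ (L - 1) ≤
        μ {ω |
          h₁ ω a * (AdjoinRoot.root ((X : Polynomial (ZMod 2)) ^ L + 1)) ^ 2
              + h₁ ω a * AdjoinRoot.root ((X : Polynomial (ZMod 2)) ^ L + 1) + h₁ ω b
            = h₁ ω a * (AdjoinRoot.root ((X : Polynomial (ZMod 2)) ^ L + 1)) ^ 2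
              + h₁ ω b * AdjoinRoot.root ((X : Polynomial (ZMod 2)) ^ L + 1) + h₁ ω a}
      ∧ (1 : ℝ≥0∞) / 2 ^ L < 1 / 2 ^ (L - 1) := by
  have hL0 : L ≠ 0 := by omega
  have hmonic : ((X : (ZMod 2)[X]) ^ L + 1).Monic := monic_X_pow_add_C 1 hL0
  have hdeg : ((X : (ZMod 2)[X]) ^ L + 1).natDegree = L := natDegree_X_pow_add_C
  have : Finite (AdjoinRoot ((X : (ZMod 2)[X]) ^ L + 1)) := AdjoinRoot.finite_of_monic hmonic
  let _ : MeasurableSpace (AdjoinRoot ((X : (ZMod 2)[X]) ^ L + 1)) := ⊤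
  set x := AdjoinRoot.root ((X : (ZMod 2)[X]) ^ L + 1)
  set g := ∑ i ∈ Finset.range L, x ^ i
  have hg : g * (x - 1) = 0 := by rw [geom_sum_mul, AdjoinRoot.root_X_pow_add_one_pow, sub_self]
  have hg0 : g ≠ 0 := by
    simpa only [hdeg] using AdjoinRoot.geom_sum_root_ne_zero_s4 hmonic (hdeg.symm ▸ hL0)
  have hmeas' : ∀ c, Measurable fun ω => h₁ ω c := fun c => measurable_to_countable' (hmeas c)
  have h_diff_mem := (hind.indepFun hab).measure_sub_preimage_finset (hmeas' a) (hmeas' b)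
    (hunif a) {0, g}
  rw [Finset.card_pair hg0.symm, Nat.cast_two, two_mul] at h_diff_mem
  rw [ENNReal.one_div_two_pow_sub_one hL0, two_mul]
  refine ⟨h_diff_mem ▸ measure_mono fun ω hω => ?_, ENNReal.lt_add_right (by simp) (by simp)⟩
  simp only [Finset.coe_insert, Finset.coe_singleton, Set.mem_preimage, Pi.sub_apply,
    Set.mem_insert_iff, Set.mem_singleton_iff] at hω
  rw [Set.mem_ofPred_eq, cyclic_hash_aab_eq_aba_iff]
  rcases hω with h | h <;> rw [h]
  exacts [zero_mul _, hg]
end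

section
/- Let p(x) be an irreducible polynomial of degree L over GF(2), let h_1 : Σ → GF(2)[x]/p(x) be a fully independent uniformly random symbol hash, and define the General hash h(a_1,...,a_n) = h_1(a_1)x^{n-1} + ... + h_1(a_n) in the field GF(2)[x]/p(x), with L ≥ n. Then the family of General hashes is pairwise independent: for any two distinct n-grams u, v and any y, y' in the field, P(h(u)=y and h(v)=y') = 1/4^L. -/
/-!
Restricted to the finitely many symbols occurring in `u` or `v`, the symbol hash is a uniform
random vector `g ∈ F^S`, and `(h(u), h(v))` is the image of `g` under a linear map `F^S → F²`,
hence uniform on `F²` as soon as that map is onto, i.e. as soon as the functionals `h(u)` and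
`h(v)` are linearly independent. Since `n ≤ L`, the weights `x^(n-1-i)` are linearly independent
over `GF(2)`. Evaluating `α h(u) + β h(v) = 0` at the constant hash `1` gives
`(α + β) Σ x^(n-1-i) = 0`, so `β = -α`; and `α ≠ 0` would force `h(u) = h(v)`, which tested on
indicator hashes gives `u = v`.
-/

open MeasureTheory Polynomial Finset ProbabilityTheory

theorem LinearIndependent.sum_ne_zero {ι k M : Type*} [Fintype ι] [Nonempty ι] [Ring k]
    [Nontrivial k] [AddCommGroup M] [Module k M] {v : ι → M} (hv : LinearIndependent k v) :
    ∑ i, v i ≠ 0 := by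
  intro h
  obtain ⟨i⟩ := ‹Nonempty ι›
  simpa using Fintype.linearIndependent_iff.mp hv 1 (by simpa using h) i

theorem LinearIndependent.pow_rev {k K : Type*} [CommRing k] [Ring K] [Algebra k K] {x : K}
    {m n : ℕ} (hx : LinearIndependent k fun i : Fin m => x ^ (i : ℕ)) (hnm : n ≤ m) :
    LinearIndependent k fun i : Fin n => x ^ (n - 1 - i : ℕ) := by
  convert hx.comp (fun i : Fin n => Fin.castLE hnm i.rev)
    ((Fin.castLE_injective hnm).comp Fin.rev_injective) using 2 with i
  simp only [Function.comp_apply, Fin.val_castLE, Fin.val_rev]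
  rw [Nat.sub_sub, Nat.add_comm]

theorem LinearMap.prod_surjective_of_linearIndependent {K M : Type*} [Field K] [AddCommGroup M]
    [Module K M] {f g : M →ₗ[K] K} (hfg : LinearIndependent K ![f, g]) :
    Function.Surjective (f.prod g) := by
  rw [← LinearMap.dualMap_injective_iff, injective_iff_map_eq_zero]
  intro χ hχ
  have hχ_apply (a b : K) : χ (a, b) = a * χ (1, 0) + b * χ (0, 1) := by
    conv_lhs =>
      rw [show ((a, b) : K × K) = a • ((1 : K), (0 : K)) + b • ((0 : K), (1 : K)) by simp]
    rw [map_add, map_smul, map_smul, smul_eq_mul, smul_eq_mul]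
  obtain ⟨h1, h2⟩ := LinearIndependent.pair_iff.mp hfg (χ (1, 0)) (χ (0, 1)) <|
    LinearMap.ext fun x => by
      simp only [LinearMap.add_apply, LinearMap.smul_apply, smul_eq_mul, LinearMap.zero_apply]
      rw [mul_comm _ (f x), mul_comm _ (g x), ← hχ_apply]
      exact LinearMap.congr_fun hχ x
  exact LinearMap.ext fun z => by rw [← Prod.mk.eta (p := z), hχ_apply, h1, h2]; simp

theorem AdjoinRoot.card_eq_pow_natDegree {K : Type*} [Field K] [Fintype K] {p : K[X]}
    (hp : p ≠ 0) [Fintype (AdjoinRoot p)] :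
    Fintype.card (AdjoinRoot p) = Fintype.card K ^ p.natDegree := by
  rw [Module.card_fintype (AdjoinRoot.powerBasis hp).basis]
  simp

section NgramHash

variable {ι K : Type*} {n : ℕ}

/-- With weights `w i = x ^ (n - 1 - i)`, `ngramHash w u h₁` is the General hash of `u`. -/
def ngramHash [CommSemiring K] (w : Fin n → K) (u : Fin n → ι) : (ι → K) →ₗ[K] K where
  toFun g := ∑ i, g (u i) * w i
  map_add' g g' := by simp [add_mul, sum_add_distrib]
  map_smul' c g := by simp [mul_sum, mul_assoc]

theorem ngramHash_apply [CommSemiring K] (w : Fin n → K) (u : Fin n → ι) (g : ι → K) :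
    ngramHash w u g = ∑ i, g (u i) * w i := rfl

variable {k : Type*} [CommRing k] {w : Fin n → K}

theorem ngramHash_algebraMap [CommRing K] [Algebra k K] (w : Fin n → K) (u : Fin n → ι)
    (g : ι → k) : ngramHash w u (fun a => algebraMap k K (g a)) = ∑ i, g (u i) • w i := by
  simp [ngramHash_apply, Algebra.smul_def]

theorem ngramHash_injective [Nontrivial k] [CommRing K] [Algebra k K] (hw : LinearIndependent k w) :
    Function.Injective (ngramHash (ι := ι) w) := by
  classical
  intro u v huv
  funext i
  have hsub := LinearMap.congr_fun huv fun a => algebraMap k K ((Pi.single (u i) 1 : ι → k) a)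
  rw [ngramHash_algebraMap, ngramHash_algebraMap, ← sub_eq_zero, ← sum_sub_distrib] at hsub
  simp_rw [← sub_smul] at hsub
  have := Fintype.linearIndependent_iff.mp hw _ hsub i
  by_contra hne
  simp [Ne.symm hne] at this

theorem ngramHash_prod_surjective [Nontrivial k] [Field K] [Algebra k K]
    (hw : LinearIndependent k w) {u v : Fin n → ι} (huv : u ≠ v) :
    Function.Surjective ((ngramHash w u).prod (ngramHash w v)) := by
  obtain ⟨i, -⟩ := Function.ne_iff.mp huv
  have : Nonempty (Fin n) := ⟨i⟩
  refine LinearMap.prod_surjective_of_linearIndependent <|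
    LinearIndependent.pair_iff.mpr fun α β hαβ => ?_
  have hαβ_apply (g : ι → K) : α * ngramHash w u g + β * ngramHash w v g = 0 := by
    simpa using LinearMap.congr_fun hαβ g
  have hβ : β = -α := by
    have h1 := hαβ_apply 1
    simp only [ngramHash_apply, Pi.one_apply, one_mul, ← add_mul] at h1
    linear_combination (mul_eq_zero.mp h1).resolve_right hw.sum_ne_zero
  have hα : α = 0 := by
    by_contra hα
    refine huv (ngramHash_injective hw (LinearMap.ext fun g => ?_))
    have h := hαβ_apply g
    rw [hβ, neg_mul, ← sub_eq_add_neg, ← mul_sub] at h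
    exact sub_eq_zero.mp ((mul_eq_zero.mp h).resolve_left hα)
  exact ⟨hα, by rw [hβ, hα, neg_zero]⟩

end NgramHash

theorem card_mul_card_fiber_of_surjective {G M : Type*} [AddGroup G] [Fintype G] [AddMonoid M]
    [Fintype M] [DecidableEq M] (φ : G →+ M) (hφ : Function.Surjective φ) (z : M) :
    Fintype.card M * #{g | φ g = z} = Fintype.card G := by
  rw [← card_univ (α := G), card_eq_sum_card_fiberwise (s := (univ : Finset G)) (t := univ)
    fun g _ => mem_univ (φ g),
    sum_congr rfl fun z' _ => AddMonoidHom.card_fiber_eq_of_mem_range φ (hφ z') (hφ z)]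
  simp

theorem preimage_singleton_eq_iInter {Ω ι F : Type*} (X : ι → Ω → F) (g : ι → F) :
    (fun ω i => X i ω) ⁻¹' {g} = ⋂ i, {ω | X i ω = g i} := by
  ext ω; simp [funext_iff]

section UniformHash

variable {Ω ι F : Type*} [MeasurableSpace Ω] {μ : Measure Ω} [Fintype ι] [Fintype F]
  {X : ι → Ω → F}

theorem measure_preimage_singleton_of_iIndepFun_uniform
    (hind : iIndepFun (m := fun _ => (⊤ : MeasurableSpace F)) X μ)
    (hunif : ∀ i r, μ {ω | X i ω = r} = (Fintype.card F : ENNReal)⁻¹) (g : ι → F) :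
    μ ((fun ω i => X i ω) ⁻¹' {g}) = ((Fintype.card F : ENNReal) ^ Fintype.card ι)⁻¹ := by
  rw [preimage_singleton_eq_iInter,
    hind.meas_iInter (s := fun i => {ω | X i ω = g i}) fun i => ⟨{g i}, trivial, rfl⟩]
  simp [hunif, ENNReal.inv_pow]

theorem measure_map_eq_of_iIndepFun_uniform [AddCommGroup F] {M : Type*} [AddCommGroup M]
    [Fintype M] [DecidableEq M] (hmeas : ∀ i r, MeasurableSet {ω | X i ω = r})
    (hind : iIndepFun (m := fun _ => (⊤ : MeasurableSpace F)) X μ)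
    (hunif : ∀ i r, μ {ω | X i ω = r} = (Fintype.card F : ENNReal)⁻¹)
    (φ : (ι → F) →+ M) (hφ : Function.Surjective φ) (z : M) :
    μ {ω | φ (fun i => X i ω) = z} = (Fintype.card M : ENNReal)⁻¹ := by
  classical
  have hfiber : {ω | φ (fun i => X i ω) = z} =
      (fun ω i => X i ω) ⁻¹' ↑({g | φ g = z} : Finset (ι → F)) := by
    ext ω; simp
  rw [hfiber, ← sum_measure_preimage_singleton _ fun g _ => ?_]
  · rw [sum_congr rfl fun g _ => measure_preimage_singleton_of_iIndepFun_uniform hind hunif g,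
      sum_const, nsmul_eq_mul]
    have hcard := card_mul_card_fiber_of_surjective φ hφ z
    rw [Fintype.card_fun] at hcard
    have hN : (#{g | φ g = z} : ENNReal) ≠ 0 :=
      Nat.cast_ne_zero.mpr (right_ne_zero_of_mul (hcard ▸ (pow_pos Fintype.card_pos _).ne'))
    rw [← Nat.cast_pow, ← hcard, Nat.cast_mul, ENNReal.mul_inv (by simp) (by simp), mul_comm,
      mul_assoc, ENNReal.inv_mul_cancel hN (by simp), mul_one]
  · rw [preimage_singleton_eq_iInter]
    exact MeasurableSet.iInter fun i => hmeas i (g i)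

end UniformHash

theorem stmt_5_general
    {Ω : Type*} [MeasurableSpace Ω] (μ : Measure Ω)
    {A : Type*} (n L : ℕ) (hnL : n ≤ L)
    (p : Polynomial (ZMod 2)) (hp : Irreducible p) (hdeg : p.natDegree = L)
    (h₁ : Ω → A → AdjoinRoot p)
    (hmeas : ∀ (c : A) (r : AdjoinRoot p), MeasurableSet {ω | h₁ ω c = r})
    (hunif : ∀ (c : A) (r : AdjoinRoot p), μ {ω | h₁ ω c = r} = 1 / 2 ^ L)
    (hind : ProbabilityTheory.iIndepFun (m := fun _ : A => (⊤ : MeasurableSpace (AdjoinRoot p)))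
      (fun c ω => h₁ ω c) μ) :
    ∀ (u v : Fin n → A), u ≠ v → ∀ y y' : AdjoinRoot p,
      μ {ω | (∑ i : Fin n, h₁ ω (u i) * (AdjoinRoot.root p) ^ (n - 1 - (i : ℕ))) = y ∧
             (∑ i : Fin n, h₁ ω (v i) * (AdjoinRoot.root p) ^ (n - 1 - (i : ℕ))) = y'} =
        1 / 4 ^ L := by
  classical
  intro u v huv y y'
  have : Fact (Irreducible p) := ⟨hp⟩
  let pb := AdjoinRoot.powerBasis hp.ne_zero
  let _ : Fintype (AdjoinRoot p) := Module.fintypeOfFintype pb.basis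
  have hcard : Fintype.card (AdjoinRoot p) = 2 ^ L := by
    rw [AdjoinRoot.card_eq_pow_natDegree hp.ne_zero, ZMod.card, hdeg]
  have hw : LinearIndependent (ZMod 2) fun i : Fin n => AdjoinRoot.root p ^ (n - 1 - i : ℕ) :=
    LinearIndependent.pow_rev (x := pb.gen) (pb.coe_basis ▸ pb.basis.linearIndependent)
      (by simpa [pb, hdeg] using hnL)
  let S : Finset A := univ.image u ∪ univ.image v
  let u' : Fin n → S := fun i => ⟨u i, mem_union_left _ (mem_image_of_mem u (mem_univ i))⟩
  let v' : Fin n → S := fun i => ⟨v i, mem_union_right _ (mem_image_of_mem v (mem_univ i))⟩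
  have huv' : u' ≠ v' := fun h => huv (funext fun i => congr_arg Subtype.val (congr_fun h i))
  have hpair := measure_map_eq_of_iIndepFun_uniform (X := fun (a : S) ω => h₁ ω a) (μ := μ)
    (fun a r => hmeas a r) (hind.precomp Subtype.val_injective)
    (fun a r => by rw [hunif, hcard, one_div]; norm_cast)
    ((ngramHash _ u').prod (ngramHash _ v')).toAddMonoidHom
    (ngramHash_prod_surjective hw huv') (y, y')
  convert hpair using 2
  · ext ω; simp [ngramHash_apply, u', v']
  · rw [Fintype.card_prod, hcard, one_div]; norm_num [← mul_pow]

/-- With `p(x)` irreducible of degree `L` over `GF(2)` and a fully independent uniform symbol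
hash `h₁ : Σ → GF(2)[x]/p(x)`, the General hash
`h(a_1,…,a_n) = Σ h₁(a_i) x^{n-i}` is pairwise independent. -/
theorem stmt_5
    {Ω : Type*} [MeasurableSpace Ω] (μ : Measure Ω) [IsProbabilityMeasure μ]
    {A : Type*} (n L : ℕ) (hnL : n ≤ L)
    (p : Polynomial (ZMod 2)) (hp : Irreducible p) (hdeg : p.natDegree = L)
    (h₁ : Ω → A → AdjoinRoot p)
    (hmeas : ∀ (c : A) (r : AdjoinRoot p), MeasurableSet {ω | h₁ ω c = r})
    (hunif : ∀ (c : A) (r : AdjoinRoot p), μ {ω | h₁ ω c = r} = 1 / 2 ^ L)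
    (hind : ProbabilityTheory.iIndepFun (m := fun _ : A => (⊤ : MeasurableSpace (AdjoinRoot p)))
      (fun c ω => h₁ ω c) μ) :
    ∀ (u v : Fin n → A), u ≠ v → ∀ y y' : AdjoinRoot p,
      μ {ω | (∑ i : Fin n, h₁ ω (u i) * (AdjoinRoot.root p) ^ (n - 1 - (i : ℕ))) = y ∧
             (∑ i : Fin n, h₁ ω (v i) * (AdjoinRoot.root p) ^ (n - 1 - (i : ℕ))) = y'} =
        1 / 4 ^ L :=
  stmt_5_general μ n L hnL p hp hdeg h₁ hmeas hunif hind
end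

section
/- Randomized Integer-Division hashing modulo 2^L with odd base B is not uniform on n-grams for n even: for any symbol a, P(h(a^n) = 0) ≥ 1/2^{L-1}. -/
open MeasureTheory

/-- Randomized Integer-Division hashing modulo `2^L`,
`h(x_1,…,x_n) = Σ B^{i-1} h₁(x_i) mod 2^L`, with `B` odd is not uniform on `n`-grams
for `n` even: `P(h(aⁿ) = 0) ≥ 1/2^{L-1}`. -/
theorem stmt_7
    {Ω : Type*} [MeasurableSpace Ω] (μ : Measure Ω) [IsProbabilityMeasure μ]
    {A : Type*} (n L : ℕ) (hL : 1 ≤ L) (B : ℕ) (hB : Odd B) (hn : Even n)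
    (h₁ : Ω → A → ZMod (2 ^ L))
    (hmeas : ∀ (c : A) (r : ZMod (2 ^ L)), MeasurableSet {ω | h₁ ω c = r})
    (hunif : ∀ (c : A) (r : ZMod (2 ^ L)), μ {ω | h₁ ω c = r} = 1 / 2 ^ L)
    (a : A) :
    1 / 2 ^ (L - 1) ≤
      μ {ω | (∑ i : Fin n, (B : ZMod (2 ^ L)) ^ (i : ℕ) * h₁ ω a) = 0} := by
  have hpos : (0:ℕ) < 2 ^ L := pow_pos (by norm_num) L
  haveI : NeZero (2 ^ L) := ⟨hpos.ne'⟩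
  -- the geometric sum is even
  have hSeven : Even (∑ i ∈ Finset.range n, B ^ i) := by
    rw [Nat.even_iff, Finset.sum_nat_mod]
    have : ∀ i ∈ Finset.range n, B ^ i % 2 = 1 := fun i _ =>
      Nat.odd_iff.mp (hB.pow)
    rw [Finset.sum_congr rfl this, Finset.sum_const, Finset.card_range, smul_eq_mul,
      mul_one, ← Nat.even_iff]
    exact hn
  obtain ⟨t, ht⟩ := hSeven
  set r : ZMod (2 ^ L) := ((2 ^ (L - 1) : ℕ) : ZMod (2 ^ L)) with hr
  have hSum : (∑ i : Fin n, (B : ZMod (2 ^ L)) ^ (i : ℕ))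
      = ((∑ i ∈ Finset.range n, B ^ i : ℕ) : ZMod (2 ^ L)) := by
    push_cast
    rw [Fin.sum_univ_eq_sum_range]
  have key : ∀ ω, h₁ ω a = 0 ∨ h₁ ω a = r →
      (∑ i : Fin n, (B : ZMod (2 ^ L)) ^ (i : ℕ) * h₁ ω a) = 0 := by
    intro ω hω
    rw [← Finset.sum_mul, hSum]
    rcases hω with h | h
    · rw [h, mul_zero]
    · rw [h, hr, ht, ← Nat.cast_mul]
      have : (t + t) * 2 ^ (L - 1) = t * 2 ^ L := by
        rw [← two_mul, mul_assoc, mul_left_comm]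
        congr 1
        rw [← pow_succ']
        congr 1
        omega
      rw [this, Nat.cast_mul, ZMod.natCast_self, mul_zero]
  have hsub : {ω | h₁ ω a = 0} ∪ {ω | h₁ ω a = r} ⊆
      {ω | (∑ i : Fin n, (B : ZMod (2 ^ L)) ^ (i : ℕ) * h₁ ω a) = 0} := by
    rintro ω (h | h)
    · exact key ω (Or.inl h)
    · exact key ω (Or.inr h)
  have hne : (0 : ZMod (2 ^ L)) ≠ r := by
    rw [hr]
    intro h
    have := (ZMod.natCast_eq_zero_iff _ _).mp h.symm
    have h1 : 2 ^ (L - 1) < 2 ^ L := Nat.pow_lt_pow_right (by norm_num) (by omega)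
    have h2 : 0 < 2 ^ (L - 1) := pow_pos (by norm_num) _
    exact absurd (Nat.le_of_dvd h2 this) (not_le.mpr h1)
  have hdisj : Disjoint {ω | h₁ ω a = 0} {ω | h₁ ω a = r} := by
    rw [Set.disjoint_left]
    intro ω h0 h1
    exact hne (h0 ▸ h1 ▸ rfl)
  calc (1 : ENNReal) / 2 ^ (L - 1) = 1 / 2 ^ L + 1 / 2 ^ L := by
        rw [ENNReal.div_add_div_same]
        have h2L : (2 : ENNReal) ^ L = 2 ^ (L - 1) * 2 := by
          rw [← pow_succ]
          congr 1
          omega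
        rw [h2L, div_eq_mul_inv, div_eq_mul_inv, one_mul,
          show ((1:ENNReal) + 1) = 2 from by norm_num,
          ENNReal.mul_inv (by simp) (by simp),
          mul_comm ((2:ENNReal) ^ (L - 1))⁻¹ 2⁻¹, ← mul_assoc,
          ENNReal.mul_inv_cancel (by norm_num) (by norm_num), one_mul]
    _ = μ {ω | h₁ ω a = 0} + μ {ω | h₁ ω a = r} := by rw [hunif, hunif]
    _ = μ ({ω | h₁ ω a = 0} ∪ {ω | h₁ ω a = r}) :=
        (measure_union hdisj (hmeas a r)).symm
    _ ≤ _ := measure_mono hsub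
end
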